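/- With the setup of the x-condition theorem, fix k ≥ 1 and let h_1,...,h_s be the products f_{i_1}···f_{i_k} whose corresponding monomials h_j^* = y_{i_1}···y_{i_k} are standard (i.e., not in in_<(J)), ordered so that h_1^* <' ... <' h_s^*. If the colon ideal I_j = (h_1,...,h_{j-1}) : h_j is proper, then in_<(I_j) is generated by exactly those variables x_i of S such that x_i h_j^* ∈ in_<(J). -/

import Mathlib

open MvPolynomial Finsupp

namespace Paper

variable (K : Type) [Field K] (n : ℕ)

/-- The polynomial ring `S = K[x_1,…,x_n]`. -/
abbrev S := MvPolynomial (Fin n) K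

/-- An ideal of `S` is generated by linear forms. -/
def GenByLinearForms (I : Ideal (S K n)) : Prop :=
  ∃ L : Set (S K n), (∀ f ∈ L, f ∈ homogeneousSubmodule (Fin n) K 1) ∧ I = Ideal.span L

variable {M : Type} [AddCommGroup M] [Module (S K n) M]

/-- `M` has linear quotients with respect to the system of generators `f`. -/
def HasLinearQuotientsWith {s : ℕ} (f : Fin s → M) : Prop :=
  (Submodule.span (S K n) (Set.range f) = ⊤) ∧
  ∀ j : Fin s,
    ((Submodule.span (S K n) (f '' {i | i < j})).colon (Submodule.span (S K n) {f j}) = ⊤ ∨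
      GenByLinearForms K n
        ((Submodule.span (S K n) (f '' {i | i < j})).colon (Submodule.span (S K n) {f j})))

/-- A minimal system of generators. -/
def IsMinimalGenSys {s : ℕ} (f : Fin s → M) : Prop :=
  Submodule.span (S K n) (Set.range f) = ⊤ ∧
  ∀ j, f j ∉ Submodule.span (S K n) (f '' {i | i ≠ j})

/-- The degree `t` component of the graded free module `⊕ S(-a i)`. -/
def freeComp {r : ℕ} (a : Fin r → ℕ) (t : ℕ) :
    Submodule K (Fin r →₀ S K n) where
  carrier := {v | ∀ i, v i ∈ homogeneousSubmodule (Fin n) K (t - a i) ∧ (t < a i → v i = 0)}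
  add_mem' := by
    intro v w hv hw i
    refine ⟨Submodule.add_mem _ (hv i).1 (hw i).1, fun h => ?_⟩
    simp [Finsupp.add_apply, (hv i).2 h, (hw i).2 h]
  zero_mem' := by
    intro i
    simp
  smul_mem' := by
    intro c v hv i
    refine ⟨Submodule.smul_mem _ c (hv i).1, fun h => ?_⟩
    simp [Finsupp.smul_apply, (hv i).2 h]

variable [Module K M] [IsScalarTower K (S K n) M]

/-- A graded free resolution of the graded module `M` with graded pieces `ℳ`. -/
structure GradedFreeResolution (ℳ : ℕ → Submodule K M) where
  rk : ℕ → ℕ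
  deg : (i : ℕ) → Fin (rk i) → ℕ
  d : (i : ℕ) → ((Fin (rk (i+1)) →₀ S K n) →ₗ[S K n] (Fin (rk i) →₀ S K n))
  aug : (Fin (rk 0) →₀ S K n) →ₗ[S K n] M
  aug_surj : Function.Surjective aug
  exact_aug : Function.Exact (d 0) aug
  exact : ∀ i, Function.Exact (d (i+1)) (d i)
  aug_graded : ∀ t, ∀ v ∈ freeComp K n (deg 0) t, aug v ∈ ℳ t
  d_graded : ∀ i t, ∀ v ∈ freeComp K n (deg (i+1)) t, d i v ∈ freeComp K n (deg i) t

/-- `M` (with grading `ℳ`) has a `d₀`-linear resolution. -/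
def HasLinearResolution (ℳ : ℕ → Submodule K M) (d₀ : ℕ) : Prop :=
  ∃ R : GradedFreeResolution K n ℳ, ∀ i k, R.deg i k = d₀ + i

/-- The submodule of `M` generated by the homogeneous elements of degree `j`. -/
noncomputable def degreeSubmodule (ℳ : ℕ → Submodule K M) (j : ℕ) : Submodule (S K n) M :=
  Submodule.span (S K n) (ℳ j : Set M)

/-- The grading induced on a submodule. -/
noncomputable def subGrading (ℳ : ℕ → Submodule K M) (N : Submodule (S K n) M) : ℕ → Submodule K N :=
  fun t => (ℳ t).comap ((N.subtype).restrictScalars K)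

/-- `M` is componentwise linear. -/
def ComponentwiseLinear (ℳ : ℕ → Submodule K M) : Prop :=
  ∀ j : ℕ, HasLinearResolution K n (subGrading K n ℳ (degreeSubmodule K n ℳ j)) j

/-- `ℳ` is a grading of the `S`-module `M`. -/
structure IsGrading (ℳ : ℕ → Submodule K M) : Prop where
  internal : DirectSum.IsInternal (fun i => ℳ i)
  smul_mem : ∀ i j : ℕ, ∀ p ∈ homogeneousSubmodule (Fin n) K i, ∀ x ∈ ℳ j, p • x ∈ ℳ (i + j)

/-- The graded maximal ideal of `S`. -/
noncomputable def maxIdeal : Ideal (S K n) := Ideal.span (Set.range X)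

/-- Minimality of a graded free resolution. -/
def IsMinimalRes {ℳ : ℕ → Submodule K M} (R : GradedFreeResolution K n ℳ) : Prop :=
  (∀ i, LinearMap.range (R.d i) ≤ (maxIdeal K n) • (⊤ : Submodule (S K n) (Fin (R.rk i) →₀ S K n))) ∧
  (LinearMap.ker R.aug ≤ (maxIdeal K n) • (⊤ : Submodule (S K n) (Fin (R.rk 0) →₀ S K n)))

/-- The graded Betti numbers read off from a resolution. -/
def betti {ℳ : ℕ → Submodule K M} (R : GradedFreeResolution K n ℳ) (i j : ℕ) : ℕ :=
  (Finset.univ.filter (fun k => R.deg i k = j)).card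

/-- `g` is an `M`-regular sequence of elements of the graded maximal ideal. -/
def IsRegularSeq {t : ℕ} (g : Fin t → S K n) : Prop :=
  (∀ i, g i ∈ maxIdeal K n) ∧
  (∀ i : Fin t, ∀ x : M,
      g i • x ∈ (Ideal.span (g '' {i' | i' < i})) • (⊤ : Submodule (S K n) M) →
        x ∈ (Ideal.span (g '' {i' | i' < i})) • (⊤ : Submodule (S K n) M)) ∧
  (Ideal.span (Set.range g)) • (⊤ : Submodule (S K n) M) ≠ ⊤

/-- The depth of `M` over `S`. -/
noncomputable def depth : ℕ∞ :=
  sSup ((fun t : ℕ => (t : ℕ∞)) ''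
    {t : ℕ | ∃ g : Fin t → S K n, IsRegularSeq K n (M := M) g})

end Paper

section MonOrd

open MvPolynomial

variable {K : Type} [Field K] {σ : Type*}

/-- The leading exponent of a polynomial with respect to a monomial order. -/
noncomputable def leadExp (m : MonomialOrder σ) (p : MvPolynomial σ K) : σ →₀ ℕ :=
  m.toSyn.symm (p.support.sup (fun c => m.toSyn c))

/-- The initial ideal of `J` with respect to a monomial order. -/
noncomputable def inIdeal (m : MonomialOrder σ) (J : Ideal (MvPolynomial σ K)) :
    Ideal (MvPolynomial σ K) :=
  Ideal.span ((fun p => monomial (leadExp m p) (1 : K)) '' {p | p ∈ J ∧ p ≠ 0})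

variable {A B : Type*}

/-- The restriction of an exponent vector to the first block of variables. -/
noncomputable def xPart (c : (A ⊕ B) →₀ ℕ) : A →₀ ℕ :=
  Finsupp.comapDomain Sum.inl c Sum.inl_injective.injOn

/-- The restriction of an exponent vector to the second block of variables. -/
noncomputable def yPart (c : (A ⊕ B) →₀ ℕ) : B →₀ ℕ :=
  Finsupp.comapDomain Sum.inr c Sum.inr_injective.injOn

/-- `ord` compares the `y`-part first (via `ordY`) and breaks ties using the `x`-part. -/
def ComparesYFirst (ord : MonomialOrder (A ⊕ B)) (ordY : MonomialOrder B)
    (ordX : MonomialOrder A) : Prop :=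
  ∀ c d : (A ⊕ B) →₀ ℕ,
    ord.toSyn c < ord.toSyn d ↔
      (ordY.toSyn (yPart c) < ordY.toSyn (yPart d) ∨
        (yPart c = yPart d ∧ ordX.toSyn (xPart c) < ordX.toSyn (xPart d)))

/-- The x-condition: the initial ideal of `J` is generated by monomials involving
at most one `x`-variable, with exponent at most 1. -/
def XCondition [Fintype A] (ord : MonomialOrder (A ⊕ B)) (J : Ideal (MvPolynomial (A ⊕ B) K)) :
    Prop :=
  ∃ D : Set ((A ⊕ B) →₀ ℕ), (∀ c ∈ D, (∑ i : A, c (Sum.inl i)) ≤ 1) ∧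
    inIdeal ord J = Ideal.span ((fun c => monomial c (1 : K)) '' D)

/-- Lexicographic comparison of exponent vectors, where `prio j i` means that variable `j`
has strictly higher priority than `i`. -/
def lexLt (prio : A → A → Prop) (a b : A →₀ ℕ) : Prop :=
  ∃ i, a i < b i ∧ ∀ j, prio j i → a j = b j

end MonOrd

namespace Paper

open MvPolynomial

variable (K : Type) [Field K] (n m : ℕ)

/-- The bigraded polynomial ring `T = K[x_1,…,x_n,y_1,…,y_m]`. -/
abbrev TT := MvPolynomial (Fin n ⊕ Fin m) K

/-- The inclusion `S → T` on the `x`-variables. -/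
noncomputable def ιS : S K n →ₐ[K] TT K n m := rename Sum.inl

noncomputable instance : Algebra (S K n) (TT K n m) := (ιS K n m).toRingHom.toAlgebra

/-- The monomial `y^c` in `T`. -/
noncomputable def ymon (c : Fin m →₀ ℕ) : TT K n m :=
  monomial (Finsupp.mapDomain Sum.inr c) (1 : K)

/-- Total `x`-degree of an exponent vector of `T`. -/
def xdegT (c : (Fin n ⊕ Fin m) →₀ ℕ) : ℕ := ∑ i : Fin n, c (Sum.inl i)

/-- Total `y`-degree of an exponent vector of `T`. -/
def ydegT (c : (Fin n ⊕ Fin m) →₀ ℕ) : ℕ := ∑ j : Fin m, c (Sum.inr j)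

/-- Degree of a `y`-exponent vector. -/
def ydeg (c : Fin m →₀ ℕ) : ℕ := ∑ j : Fin m, c j

/-- `J` is a bihomogeneous ideal of `T`, where `deg x_i = (1,0)` and `deg y_j = (dY j, 1)`. -/
def IsBihomogIdeal (dY : Fin m → ℕ) (J : Ideal (TT K n m)) : Prop :=
  ∃ Gs : Set (TT K n m),
    (∀ g ∈ Gs, ∃ a b : ℕ, ∀ c ∈ g.support,
        (xdegT n m c + ∑ j : Fin m, c (Sum.inr j) * dY j = a) ∧ ydegT n m c = b) ∧
    J = Ideal.span Gs

/-- `A_0 = S`: the polynomial subring `S` of `T` meets `J` trivially. -/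
def SInjectsModJ (J : Ideal (TT K n m)) : Prop :=
  ∀ p : S K n, ιS K n m p ∈ J → p = 0

/-- The `S`-module `A_k` (the `y`-degree-`k` component of `A = T/J`) has linear quotients:
there is a system of generators of `A_k` given by (classes of) monomials in the `y`'s of
degree `k` whose successive colon ideals are generated by linear forms. All computations
are performed in `T` modulo `J`. -/
def AkHasLinearQuotients (J : Ideal (TT K n m)) (k : ℕ) : Prop :=
  ∃ (s : ℕ) (H : Fin s → (Fin m →₀ ℕ)),
    (∀ j, ydeg m (H j) = k) ∧
    -- the monomials `y^{H j}` generate `A_k` over `S`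
    (∀ c : Fin m →₀ ℕ, ydeg m c = k →
      ymon K n m c ∈
        Submodule.span (S K n) (Set.range (fun j => ymon K n m (H j))) ⊔
          (J : Submodule (TT K n m) (TT K n m)).restrictScalars (S K n)) ∧
    -- successive colon ideals are `S` or generated by linear forms
    (∀ j : Fin s,
      ((Submodule.span (S K n) ((fun j' => ymon K n m (H j')) '' {i | i < j}) ⊔
          (J : Submodule (TT K n m) (TT K n m)).restrictScalars (S K n)).colon
        (Submodule.span (S K n) {ymon K n m (H j)}) = ⊤) ∨
      GenByLinearForms K n
        ((Submodule.span (S K n) ((fun j' => ymon K n m (H j')) '' {i | i < j}) ⊔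
            (J : Submodule (TT K n m) (TT K n m)).restrictScalars (S K n)).colon
          (Submodule.span (S K n) {ymon K n m (H j)})))

end Paper

/-!
For `f ∈ I_j` write `f h_j = u + v` with `u` in the `S`-span of the earlier `h`'s and `v ∈ J`.
Since `<` compares `y`-parts first, `in(v) = in(f) h_j^*`, and by the x-condition this monomial
lies in `in(J)` only through a generator `x_i y^b` with `x_i ∣ in(f)` (a generator without `x`
would make `h_j^*` non-standard). Conversely, if `x_i h_j^* ∈ in(J)`, reduce `x_i h_j^*`
modulo `J` to a combination of standard monomials of the same `y`-degree, all smaller than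
`x_i h_j^*`: those with `y`-part `h_j^*` add up to `g h_j^*` with `in(g) < x_i`, the others are
`S`-multiples of earlier `h`'s, so `x_i - g ∈ I_j` has initial monomial `x_i`.
-/

section MonomialOrder

open MvPolynomial
open scoped MonomialOrder

variable {σ : Type*} {K : Type} [Field K] (m : MonomialOrder σ)

lemma monomial_one_mem_span_monomial_one_iff {D : Set (σ →₀ ℕ)} {c : σ →₀ ℕ} :
    monomial c (1 : K) ∈ Ideal.span ((fun d => monomial d (1 : K)) '' D) ↔ ∃ d ∈ D, d ≤ c := by
  classical
  simp [mem_ideal_span_monomial_image, support_monomial]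

lemma monomial_one_mem_inIdeal_iff {J : Ideal (MvPolynomial σ K)} {c : σ →₀ ℕ} :
    monomial c (1 : K) ∈ inIdeal m J ↔ ∃ w ∈ J, w ≠ 0 ∧ m.degree w ≤ c := by
  rw [inIdeal, ← Set.image_image (fun d => monomial d (1 : K)),
    monomial_one_mem_span_monomial_one_iff]
  simp [leadExp, MonomialOrder.degree, and_assoc]

lemma monomial_degree_mem_inIdeal {J : Ideal (MvPolynomial σ K)} {w : MvPolynomial σ K}
    (hw : w ∈ J) (hw0 : w ≠ 0) : monomial (m.degree w) (1 : K) ∈ inIdeal m J :=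
  Ideal.subset_span ⟨w, ⟨hw, hw0⟩, rfl⟩

lemma degree_eq_of_mem_support {p : MvPolynomial σ K} {c : σ →₀ ℕ} (hc : c ∈ p.support)
    (h : ∀ e ∈ p.support, e ≼[m] c) : m.degree p = c :=
  m.toSyn.injective <| le_antisymm (m.degree_le_iff.mpr h) (m.le_degree hc)

lemma degree_sub_eq_of_forall_lt {a b : MvPolynomial σ K} (ha : a ≠ 0)
    (hb : ∀ e ∈ b.support, e ≺[m] m.degree a) :
    m.degree (a - b) = m.degree a ∧ a - b ≠ 0 := by
  rcases eq_or_ne b 0 with rfl | hb0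
  · simpa using ha
  have hlt := hb _ (m.degree_mem_support hb0)
  refine ⟨m.degree_sub_of_lt hlt, m.leadingCoeff_ne_zero_iff.mp ?_⟩
  rw [m.leadingCoeff_sub_of_lt hlt]
  exact m.leadingCoeff_ne_zero_iff.mpr ha

lemma exists_standard_remainder (J : Ideal (MvPolynomial σ K)) (f : MvPolynomial σ K) :
    ∃ r, f - r ∈ J ∧ (∀ c ∈ r.support, monomial c (1 : K) ∉ inIdeal m J) ∧
      m.degree r ≼[m] m.degree f := by
  obtain ⟨g, r, hfr, hdeg, hr⟩ := m.div_set (B := {p | p ∈ J ∧ p ≠ 0})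
    (fun b hb => (m.leadingCoeff_ne_zero_iff.mpr hb.2).isUnit) f
  have hq : f - r = g.sum fun b a => a * (b : MvPolynomial σ K) := by
    rw [hfr, add_sub_cancel_right, Finsupp.linearCombination_apply]; rfl
  refine ⟨r, ?_, fun c hc hmem => ?_, ?_⟩
  · rw [hq]
    exact Submodule.finsuppSum_mem _ _ _ _ fun b _ => J.mul_mem_left _ b.2.1
  · obtain ⟨w, hwJ, hw0, hle⟩ := (monomial_one_mem_inIdeal_iff m).mp hmem
    exact hr c hc w ⟨hwJ, hw0⟩ hle
  · have hsum : m.degree (f - r) ≼[m] m.degree f := by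
      rw [hq, Finsupp.sum]
      refine m.degree_sum_le.trans (Finset.sup_le fun b _ => ?_)
      rw [mul_comm]
      exact hdeg b
    rw [show r = f - (f - r) by ring]
    exact m.degree_sub_le.trans (sup_le le_rfl hsum)

end MonomialOrder

section Homogeneous

open MvPolynomial
open scoped MonomialOrder

attribute [local instance] MvPolynomial.weightedGradedAlgebra

variable {σ M : Type*} [AddCommMonoid M] [DecidableEq M] {K : Type} [Field K]
  (m : MonomialOrder σ)

lemma exists_homogeneous_standard_remainder {w : σ → M} {J : Ideal (MvPolynomial σ K)}
    (hJ : J.IsHomogeneous (weightedHomogeneousSubmodule K w)) {f : MvPolynomial σ K} {d : M}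
    (hf : f.IsWeightedHomogeneous w d) :
    ∃ r, f - r ∈ J ∧ ∀ c ∈ r.support,
      monomial c (1 : K) ∉ inIdeal m J ∧ weight w c = d ∧ c ≼[m] m.degree f := by
  obtain ⟨r, hfr, hstd, hdeg⟩ := exists_standard_remainder m J f
  refine ⟨weightedHomogeneousComponent w d r, ?_, fun c hc => ?_⟩
  · have := weightedHomogeneousComponent_mem_of_mem K w hJ hfr d
    rwa [map_sub, hf.weightedHomogeneousComponent_same] at this
  · rw [support_weightedHomogeneousComponent, Finset.mem_filter] at hc
    exact ⟨hstd c hc.1, hc.2, (m.le_degree hc.1).trans hdeg⟩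

end Homogeneous

section SumVariables

open MvPolynomial Finsupp
open scoped MonomialOrder

variable {A B : Type*}

@[simp] lemma mapDomain_inl_apply_inl (a : A →₀ ℕ) (i : A) :
    mapDomain (Sum.inl : A → A ⊕ B) a (Sum.inl i) = a i :=
  mapDomain_apply Sum.inl_injective a i

@[simp] lemma mapDomain_inr_apply_inr (b : B →₀ ℕ) (j : B) :
    mapDomain (Sum.inr : B → A ⊕ B) b (Sum.inr j) = b j :=
  mapDomain_apply Sum.inr_injective b j

@[simp] lemma mapDomain_inl_apply_inr (a : A →₀ ℕ) (j : B) :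
    mapDomain (Sum.inl : A → A ⊕ B) a (Sum.inr j) = 0 :=
  mapDomain_of_notMem_range _ _ (by simp)

@[simp] lemma mapDomain_inr_apply_inl (b : B →₀ ℕ) (i : A) :
    mapDomain (Sum.inr : B → A ⊕ B) b (Sum.inl i) = 0 :=
  mapDomain_of_notMem_range _ _ (by simp)

@[simp] lemma xPart_apply (c : (A ⊕ B) →₀ ℕ) (i : A) : xPart c i = c (Sum.inl i) := rfl

@[simp] lemma yPart_apply (c : (A ⊕ B) →₀ ℕ) (j : B) : yPart c j = c (Sum.inr j) := rfl

@[simp] lemma xPart_add (c d : (A ⊕ B) →₀ ℕ) : xPart (c + d) = xPart c + xPart d := by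
  ext; simp

@[simp] lemma yPart_add (c d : (A ⊕ B) →₀ ℕ) : yPart (c + d) = yPart c + yPart d := by
  ext; simp

@[simp] lemma xPart_mapDomain_inl (a : A →₀ ℕ) :
    xPart (mapDomain Sum.inl a : (A ⊕ B) →₀ ℕ) = a := by
  ext; simp

@[simp] lemma yPart_mapDomain_inl (a : A →₀ ℕ) :
    yPart (mapDomain Sum.inl a : (A ⊕ B) →₀ ℕ) = 0 := by
  ext; simp

@[simp] lemma xPart_mapDomain_inr (b : B →₀ ℕ) :
    xPart (mapDomain Sum.inr b : (A ⊕ B) →₀ ℕ) = 0 := by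
  ext; simp

@[simp] lemma yPart_mapDomain_inr (b : B →₀ ℕ) :
    yPart (mapDomain Sum.inr b : (A ⊕ B) →₀ ℕ) = b := by
  ext; simp

@[simp] lemma xPart_single_inl (i : A) (k : ℕ) :
    xPart (single (Sum.inl i : A ⊕ B) k) = single i k := by
  rw [← mapDomain_single, xPart_mapDomain_inl]

@[simp] lemma yPart_single_inl (i : A) (k : ℕ) : yPart (single (Sum.inl i : A ⊕ B) k) = 0 := by
  rw [← mapDomain_single, yPart_mapDomain_inl]

lemma mapDomain_xPart_add_mapDomain_yPart (c : (A ⊕ B) →₀ ℕ) :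
    mapDomain Sum.inl (xPart c) + mapDomain Sum.inr (yPart c) = c := by
  ext (i | j) <;> simp

variable {K : Type} [Field K]

lemma XCondition.exists_of_monomial_mem [Fintype A] {ord : MonomialOrder (A ⊕ B)}
    {J : Ideal (MvPolynomial (A ⊕ B) K)} (hx : XCondition ord J) {a : A →₀ ℕ} {b : B →₀ ℕ}
    (h : monomial (mapDomain Sum.inl a + mapDomain Sum.inr b) (1 : K) ∈ inIdeal ord J) :
    monomial (mapDomain Sum.inr b) (1 : K) ∈ inIdeal ord J ∨
      ∃ i, a i ≠ 0 ∧
        monomial (single (Sum.inl i) 1 + mapDomain Sum.inr b) (1 : K) ∈ inIdeal ord J := by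
  classical
  obtain ⟨D, hD, hJD⟩ := hx
  simp only [hJD, monomial_one_mem_span_monomial_one_iff] at h ⊢
  obtain ⟨d, hd, hle⟩ := h
  have hdx (i : A) : d (Sum.inl i) ≤ a i := by simpa using hle (Sum.inl i)
  have hdy (j : B) : d (Sum.inr j) ≤ b j := by simpa using hle (Sum.inr j)
  by_cases hx0 : ∀ i, d (Sum.inl i) = 0
  · refine Or.inl ⟨d, hd, fun v => ?_⟩
    rcases v with i | j <;> simp [hx0, hdy]
  obtain ⟨i, hi⟩ := not_forall.mp hx0
  have hone : ∀ i', d (Sum.inl i') ≤ if i' = i then 1 else 0 := by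
    intro i'
    split_ifs with h'
    · subst h'
      exact (Finset.single_le_sum (fun _ _ => Nat.zero_le _) (Finset.mem_univ i')).trans
        (hD d hd)
    · have := (Finset.sum_le_sum_of_subset (f := fun x => d (Sum.inl x))
        (Finset.subset_univ {i, i'})).trans (hD d hd)
      rw [Finset.sum_pair (Ne.symm h')] at this
      omega
  refine Or.inr ⟨i, fun h0 => hi (by simpa [h0] using hdx i), d, hd, fun v => ?_⟩
  rcases v with i' | j
  · simpa [single_apply, eq_comm] using hone i'
  · simpa [single_apply] using hdy j

lemma ComparesYFirst.degree_rename_inl {ord : MonomialOrder (A ⊕ B)} {ordY : MonomialOrder B}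
    {ordX : MonomialOrder A} (hcomp : ComparesYFirst ord ordY ordX) (f : MvPolynomial A K) :
    ord.degree (rename Sum.inl f) = mapDomain Sum.inl (ordX.degree f) := by
  classical
  rcases eq_or_ne f 0 with rfl | hf
  · simp
  refine degree_eq_of_mem_support ord ?_ fun e he => ?_
  · rw [support_rename_of_injective Sum.inl_injective]
    exact Finset.mem_image_of_mem _ (ordX.degree_mem_support hf)
  · rw [support_rename_of_injective Sum.inl_injective] at he
    obtain ⟨a, ha, rfl⟩ := Finset.mem_image.mp he
    refine not_lt.mp fun hlt => ?_
    rcases (hcomp _ _).mp hlt with h | h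
    · simp at h
    · simp only [xPart_mapDomain_inl] at h
      exact not_lt.mpr (ordX.le_degree ha) h.2

end SumVariables

namespace Paper

open MvPolynomial Finsupp
open scoped MonomialOrder

attribute [local instance] MvPolynomial.weightedGradedAlgebra

variable {K : Type} [Field K] {n m : ℕ}

lemma smul_eq_ιS_mul (f : S K n) (p : TT K n m) : f • p = ιS K n m f * p := rfl

lemma ymon_ne_zero (c : Fin m →₀ ℕ) : ymon K n m c ≠ 0 :=
  monomial_eq_zero.not.mpr one_ne_zero

lemma ιS_mul_ymon_ne_zero {f : S K n} (hf : f ≠ 0) (c : Fin m →₀ ℕ) :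
    ιS K n m f * ymon K n m c ≠ 0 :=
  mul_ne_zero ((map_ne_zero_iff _ (rename_injective _ Sum.inl_injective)).mpr hf) (ymon_ne_zero c)

lemma monomial_eq_ιS_mul_ymon (e : (Fin n ⊕ Fin m) →₀ ℕ) (a : K) :
    (monomial e a : TT K n m) = ιS K n m (monomial (xPart e) a) * ymon K n m (yPart e) := by
  rw [ιS, ymon, rename_monomial, monomial_mul, mul_one,
    mapDomain_xPart_add_mapDomain_yPart]

lemma ιS_X_mul_ymon (i : Fin n) (c : Fin m →₀ ℕ) :
    ιS K n m (X i) * ymon K n m c = monomial (single (Sum.inl i) 1 + mapDomain Sum.inr c) 1 := by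
  rw [ιS, ymon, rename_X, X, monomial_mul, one_mul]

lemma coeff_ιS_mul_ymon (f : S K n) (a : Fin n →₀ ℕ) (c : Fin m →₀ ℕ) :
    coeff (mapDomain Sum.inl a + mapDomain Sum.inr c) (ιS K n m f * ymon K n m c) = coeff a f := by
  rw [ymon, coeff_mul_monomial, mul_one, ιS]
  exact coeff_rename_mapDomain _ Sum.inl_injective f a

lemma degree_ιS_mul_ymon {ord : MonomialOrder (Fin n ⊕ Fin m)} {ordY : MonomialOrder (Fin m)}
    {ordX : MonomialOrder (Fin n)} (hcomp : ComparesYFirst ord ordY ordX) {f : S K n}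
    (hf : f ≠ 0) (c : Fin m →₀ ℕ) :
    ord.degree (ιS K n m f * ymon K n m c) =
      mapDomain Sum.inl (ordX.degree f) + mapDomain Sum.inr c := by
  classical
  rw [ιS, ord.degree_mul ((map_ne_zero_iff _ (rename_injective _ Sum.inl_injective)).mpr hf)
    (ymon_ne_zero c), hcomp.degree_rename_inl, ymon, ord.degree_monomial, if_neg one_ne_zero]

lemma yPart_mem_of_mem_span_ymon {P : Set (Fin m →₀ ℕ)} {u : TT K n m}
    (hu : u ∈ Submodule.span (S K n) (ymon K n m '' P)) : ∀ e ∈ u.support, yPart e ∈ P := by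
  classical
  induction hu using Submodule.span_induction with
  | mem x hx =>
    obtain ⟨c, hc, rfl⟩ := hx
    intro e he
    rw [ymon, support_monomial, if_neg one_ne_zero, Finset.mem_singleton] at he
    simpa [he] using hc
  | zero => simp
  | add x y _ _ hx hy =>
    intro e he
    rcases Finset.mem_union.mp (MvPolynomial.support_add he) with h | h
    exacts [hx e h, hy e h]
  | smul a x _ hx =>
    intro e he
    rw [smul_eq_ιS_mul] at he
    obtain ⟨e₁, he₁, e₂, he₂, rfl⟩ := Finset.mem_add.mp (support_mul _ _ he)
    rw [ιS, support_rename_of_injective Sum.inl_injective] at he₁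
    obtain ⟨a₁, -, rfl⟩ := Finset.mem_image.mp he₁
    convert hx e₂ he₂ using 1
    ext j
    simp

lemma mem_span_ymon_iff {P : Set (Fin m →₀ ℕ)} {u : TT K n m} :
    u ∈ Submodule.span (S K n) (ymon K n m '' P) ↔ ∀ e ∈ u.support, yPart e ∈ P := by
  refine ⟨yPart_mem_of_mem_span_ymon, fun h => ?_⟩
  rw [u.as_sum]
  refine Submodule.sum_mem _ fun e he => ?_
  rw [monomial_eq_ιS_mul_ymon, ← smul_eq_ιS_mul]
  exact Submodule.smul_mem _ _ (Submodule.subset_span ⟨_, h e he, rfl⟩)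

/-- The coefficient of `y^c` in `p`, viewing `T` as a polynomial ring over `S`. -/
noncomputable def yCoeff (c : Fin m →₀ ℕ) (p : TT K n m) : S K n :=
  AddMonoidAlgebra.ofCoeff <| comapDomain (fun a => mapDomain Sum.inl a + mapDomain Sum.inr c)
    (AddMonoidAlgebra.coeff p)
    ((add_left_injective _).comp (mapDomain_injective Sum.inl_injective)).injOn

lemma coeff_yCoeff (c : Fin m →₀ ℕ) (p : TT K n m) (a : Fin n →₀ ℕ) :
    coeff a (yCoeff c p) = coeff (mapDomain Sum.inl a + mapDomain Sum.inr c) p := rfl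

lemma mem_support_of_mem_support_sub_yCoeff {c : Fin m →₀ ℕ} {p : TT K n m}
    {e : (Fin n ⊕ Fin m) →₀ ℕ} (he : e ∈ (p - ιS K n m (yCoeff c p) * ymon K n m c).support) :
    e ∈ p.support ∧ yPart e ≠ c := by
  rw [MvPolynomial.mem_support_iff, coeff_sub] at he
  by_cases hy : yPart e = c
  · rw [← mapDomain_xPart_add_mapDomain_yPart e, hy, coeff_ιS_mul_ymon, coeff_yCoeff] at he
    exact absurd (sub_self _) he
  have h0 : coeff e (ιS K n m (yCoeff c p) * ymon K n m c) = 0 := by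
    refine MvPolynomial.notMem_support_iff.mp fun h => hy ?_
    refine yPart_mem_of_mem_span_ymon (P := {c}) ?_ e h
    rw [Set.image_singleton, ← smul_eq_ιS_mul]
    exact Submodule.smul_mem _ _ (Submodule.mem_span_singleton_self _)
  rw [h0, sub_zero] at he
  exact ⟨MvPolynomial.mem_support_iff.mpr he, hy⟩

lemma weight_sumElim_zero_one (e : (Fin n ⊕ Fin m) →₀ ℕ) :
    weight (Sum.elim 0 1) e = ydeg m (yPart e) := by
  rw [weight_apply, Finsupp.sum_fintype _ _ (by simp), Fintype.sum_sum_type]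
  simp [ydeg]

lemma IsBihomogIdeal.isHomogeneous {dY : Fin m → ℕ} {J : Ideal (TT K n m)}
    (hJ : IsBihomogIdeal K n m dY J) :
    J.IsHomogeneous (weightedHomogeneousSubmodule K (Sum.elim 0 1 : Fin n ⊕ Fin m → ℕ)) := by
  obtain ⟨Gs, hGs, rfl⟩ := hJ
  refine Ideal.homogeneous_span _ _ fun g hg => ?_
  obtain ⟨_, b, hb⟩ := hGs g hg
  refine ⟨b, (mem_weightedHomogeneousSubmodule _ _ _ _).mpr fun e he => ?_⟩
  rw [weight_sumElim_zero_one]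
  exact (hb e (MvPolynomial.mem_support_iff.mpr he)).2

/-- The colon ideal `(y^c' : c' ∈ P) : y^c` of `A = T/J`, as an ideal of `S`. -/
noncomputable def ymonColon (J : Ideal (TT K n m)) (P : Set (Fin m →₀ ℕ)) (c : Fin m →₀ ℕ) :
    Ideal (S K n) :=
  (Submodule.span (S K n) (ymon K n m '' P) ⊔
    (J : Submodule (TT K n m) (TT K n m)).restrictScalars (S K n)).colon
      (Submodule.span (S K n) {ymon K n m c})

variable {J : Ideal (TT K n m)} {ord : MonomialOrder (Fin n ⊕ Fin m)}
  {ordY : MonomialOrder (Fin m)} {ordX : MonomialOrder (Fin n)} {P : Set (Fin m →₀ ℕ)}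
  {c : Fin m →₀ ℕ}

lemma monomial_degree_add_mem_inIdeal (hcomp : ComparesYFirst ord ordY ordX)
    (hP : ∀ c' ∈ P, ordY.toSyn c' < ordY.toSyn c) {f : S K n} (hf : f ∈ ymonColon J P c)
    (hf0 : f ≠ 0) :
    monomial (mapDomain Sum.inl (ordX.degree f) + mapDomain Sum.inr c) (1 : K) ∈
      inIdeal ord J := by
  obtain ⟨u, hu, v, hv, huv⟩ := Submodule.mem_sup.mp (Submodule.mem_colon_span_singleton.mp hf)
  rw [smul_eq_ιS_mul] at huv
  have hu_lt : ∀ e ∈ u.support, e ≺[ord] ord.degree (ιS K n m f * ymon K n m c) :=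
      fun e he => by
    rw [degree_ιS_mul_ymon hcomp hf0]
    exact (hcomp _ _).mpr (Or.inl (by simpa using hP _ (yPart_mem_of_mem_span_ymon hu e he)))
  obtain ⟨hdeg, hne⟩ := degree_sub_eq_of_forall_lt ord (ιS_mul_ymon_ne_zero hf0 c) hu_lt
  rw [← degree_ιS_mul_ymon hcomp hf0, ← hdeg]
  refine monomial_degree_mem_inIdeal ord ?_ hne
  rwa [← huv, add_sub_cancel_left]

lemma inIdeal_ymonColon_le (hcomp : ComparesYFirst ord ordY ordX) (hx : XCondition ord J)
    (hc : ymon K n m c ∉ inIdeal ord J) (hP : ∀ c' ∈ P, ordY.toSyn c' < ordY.toSyn c) :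
    inIdeal ordX (ymonColon J P c) ≤ Ideal.span {q : S K n | ∃ i : Fin n,
      (monomial (single (Sum.inl i) 1 + mapDomain Sum.inr c) (1 : K) ∈ inIdeal ord J) ∧
        q = X i} := by
  rw [inIdeal, Ideal.span_le]
  rintro _ ⟨f, ⟨hf, hf0⟩, rfl⟩
  rcases hx.exists_of_monomial_mem (monomial_degree_add_mem_inIdeal hcomp hP hf hf0) with
    hy | ⟨i, hi, hmem⟩
  · exact absurd hy hc
  · exact Ideal.mem_of_dvd _ (X_dvd_monomial.mpr (Or.inr hi))
      (Ideal.subset_span ⟨i, hmem, rfl⟩)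

lemma X_mem_inIdeal_ymonColon (hcomp : ComparesYFirst ord ordY ordX) {dY : Fin m → ℕ}
    (hJ : IsBihomogIdeal K n m dY J)
    (hP : ∀ c', ydeg m c' = ydeg m c → ymon K n m c' ∉ inIdeal ord J →
      ordY.toSyn c' < ordY.toSyn c → c' ∈ P)
    {i : Fin n}
    (hi : monomial (single (Sum.inl i) 1 + mapDomain Sum.inr c) (1 : K) ∈ inIdeal ord J) :
    X i ∈ inIdeal ordX (ymonColon J P c) := by
  classical
  set c₁ : (Fin n ⊕ Fin m) →₀ ℕ := single (Sum.inl i) 1 + mapDomain Sum.inr c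
  obtain ⟨ρ, hρJ, hρ⟩ := exists_homogeneous_standard_remainder ord hJ.isHomogeneous
    (isWeightedHomogeneous_monomial (w := Sum.elim 0 1) c₁ (1 : K) rfl)
  have hlt : ∀ e ∈ ρ.support, e ≺[ord] c₁ := fun e he => by
    obtain ⟨hstd, -, hle⟩ := hρ e he
    rw [ord.degree_monomial, if_neg one_ne_zero] at hle
    exact lt_of_le_of_ne hle fun h => hstd (ord.toSyn.injective h ▸ hi)
  set g := yCoeff c ρ
  have hq : ρ - ιS K n m g * ymon K n m c ∈ Submodule.span (S K n) (ymon K n m '' P) := by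
    refine mem_span_ymon_iff.mpr fun e he => ?_
    obtain ⟨he, hy⟩ := mem_support_of_mem_support_sub_yCoeff he
    obtain ⟨hstd, hwt, -⟩ := hρ e he
    refine hP _ ?_ (fun h => hstd ?_) ?_
    · simpa [weight_sumElim_zero_one, c₁] using hwt
    · rw [monomial_eq_ιS_mul_ymon]
      exact Ideal.mul_mem_left _ _ h
    · rcases (hcomp _ _).mp (hlt e he) with h | h
      · simpa [c₁] using h
      · exact absurd (by simpa [c₁] using h.1) hy
  have hg : ∀ a ∈ g.support, a ≺[ordX] ordX.degree (X i : S K n) := fun a ha => by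
    rw [MvPolynomial.mem_support_iff, coeff_yCoeff, ← MvPolynomial.mem_support_iff] at ha
    rw [ordX.degree_X]
    rcases (hcomp _ _).mp (hlt _ ha) with h | h
    · simp [c₁] at h
    · simpa [c₁] using h.2
  have hmem : X i - g ∈ ymonColon J P c := by
    rw [ymonColon, Submodule.mem_colon_span_singleton, smul_eq_ιS_mul, map_sub, sub_mul,
      ιS_X_mul_ymon, show monomial c₁ 1 - ιS K n m g * ymon K n m c =
        (ρ - ιS K n m g * ymon K n m c) + (monomial c₁ 1 - ρ) by ring]
    exact Submodule.add_mem_sup hq hρJ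
  obtain ⟨hdeg, hne⟩ := degree_sub_eq_of_forall_lt ordX (X_ne_zero i) hg
  have := monomial_degree_mem_inIdeal ordX hmem hne
  rwa [hdeg, ordX.degree_X] at this

end Paper

namespace Paper

open Finsupp

theorem statement6_general (K : Type) [Field K] (n m : ℕ)
    (dY : Fin m → ℕ) (J : Ideal (TT K n m))
    (ord : MonomialOrder (Fin n ⊕ Fin m))
    (ordY : MonomialOrder (Fin m)) (ordX : MonomialOrder (Fin n))
    (hcomp : ComparesYFirst ord ordY ordX)
    (hbihom : IsBihomogIdeal K n m dY J)
    (hx : XCondition ord J)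
    (k : ℕ)
    (s : ℕ) (H : Fin s → (Fin m →₀ ℕ))
    -- `H` enumerates the standard monomials of `y`-degree `k`, increasingly for `<'`
    (hdeg : ∀ j, ydeg m (H j) = k)
    (hstd : ∀ j, ymon K n m (H j) ∉ inIdeal ord J)
    (hall : ∀ c : Fin m →₀ ℕ, ydeg m c = k → ymon K n m c ∉ inIdeal ord J → ∃ j, H j = c)
    (hsort : ∀ j₁ j₂ : Fin s, j₁ < j₂ → ordY.toSyn (H j₁) < ordY.toSyn (H j₂))
    (j : Fin s) :
    inIdeal ordX
      ((Submodule.span (S K n) ((fun j' => ymon K n m (H j')) '' {i | i < j}) ⊔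
          (J : Submodule (TT K n m) (TT K n m)).restrictScalars (S K n)).colon
        (Submodule.span (S K n) {ymon K n m (H j)})) =
    Ideal.span {q : S K n | ∃ i : Fin n,
      (monomial (Finsupp.single (Sum.inl i) 1 + Finsupp.mapDomain Sum.inr (H j)) (1 : K)
        ∈ inIdeal ord J) ∧ q = X i} := by
  have hmono : StrictMono fun j => ordY.toSyn (H j) := fun a b h => hsort a b h
  rw [← Set.image_image (ymon K n m) H]
  refine le_antisymm (inIdeal_ymonColon_le hcomp hx (hstd j) ?_) (Ideal.span_le.mpr ?_)
  · rintro _ ⟨j', hj', rfl⟩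
    exact hmono hj'
  · rintro _ ⟨i, hi, rfl⟩
    refine X_mem_inIdeal_ymonColon hcomp hbihom (fun c hc hcstd hlt => ?_) hi
    obtain ⟨j', rfl⟩ := hall c (hc.trans (hdeg j)) hcstd
    exact ⟨j', hmono.lt_iff_lt.mp hlt, rfl⟩

/-- In the setting of the x-condition theorem, let `h_1,…,h_s` correspond to
the standard monomials of `y`-degree `k`, sorted increasingly by `<'`. If the colon ideal
`I_j = (h_1,…,h_{j-1}) : h_j` is proper, then `in(I_j)` is generated by exactly those
variables `x_i` with `x_i h_j^* ∈ in_<(J)`. -/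
theorem statement6 (K : Type) [Field K] (n m : ℕ)
    (dY : Fin m → ℕ) (J : Ideal (TT K n m))
    (ord : MonomialOrder (Fin n ⊕ Fin m))
    (ordY : MonomialOrder (Fin m)) (ordX : MonomialOrder (Fin n))
    (hcomp : ComparesYFirst ord ordY ordX)
    (hbihom : IsBihomogIdeal K n m dY J)
    (hS : SInjectsModJ K n m J)
    (hx : XCondition ord J)
    (k : ℕ) (hk : 1 ≤ k)
    (s : ℕ) (H : Fin s → (Fin m →₀ ℕ))
    -- `H` enumerates the standard monomials of `y`-degree `k`, increasingly for `<'`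
    (hdeg : ∀ j, ydeg m (H j) = k)
    (hstd : ∀ j, ymon K n m (H j) ∉ inIdeal ord J)
    (hall : ∀ c : Fin m →₀ ℕ, ydeg m c = k → ymon K n m c ∉ inIdeal ord J → ∃ j, H j = c)
    (hsort : ∀ j₁ j₂ : Fin s, j₁ < j₂ → ordY.toSyn (H j₁) < ordY.toSyn (H j₂))
    (j : Fin s)
    (hproper :
      ((Submodule.span (S K n) ((fun j' => ymon K n m (H j')) '' {i | i < j}) ⊔
          (J : Submodule (TT K n m) (TT K n m)).restrictScalars (S K n)).colon
        (Submodule.span (S K n) {ymon K n m (H j)})) ≠ ⊤) :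
    inIdeal ordX
      ((Submodule.span (S K n) ((fun j' => ymon K n m (H j')) '' {i | i < j}) ⊔
          (J : Submodule (TT K n m) (TT K n m)).restrictScalars (S K n)).colon
        (Submodule.span (S K n) {ymon K n m (H j)})) =
    Ideal.span {q : S K n | ∃ i : Fin n,
      (monomial (Finsupp.single (Sum.inl i) 1 + Finsupp.mapDomain Sum.inr (H j)) (1 : K)
        ∈ inIdeal ord J) ∧ q = X i} :=
  statement6_general K n m dY J ord ordY ordX hcomp hbihom hx k s H hdeg hstd hall hsort j

end Paper
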